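/- For any positive integers n ≥ 1, if at least one of the two graphs H₁, H₂ is isomorphic to an induced subgraph of the path P₄, then the family of (H₁,H₂)-free finite simple graphs is near optimal colourable. -/

import Mathlib

open SimpleGraph

/-- The join `G ∨ H` of two graphs: the disjoint union of `G` and `H` together with
all edges between the two parts. -/
def SimpleGraph.join {α β : Type*} (G : SimpleGraph α) (H : SimpleGraph β) :
    SimpleGraph (α ⊕ β) where
  Adj u v := match u, v with
    | Sum.inl u, Sum.inl v => G.Adj u v
    | Sum.inr u, Sum.inr v => H.Adj u v
    | Sum.inl _, Sum.inr _ => True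
    | Sum.inr _, Sum.inl _ => True
  symm := ⟨fun u v => match u, v with
    | Sum.inl u, Sum.inl v => fun h => h.symm
    | Sum.inr u, Sum.inr v => fun h => h.symm
    | Sum.inl _, Sum.inr _ => fun _ => trivial
    | Sum.inr _, Sum.inl _ => fun _ => trivial⟩
  loopless := ⟨fun u => by cases u <;> simp⟩

/-- `G` is `H`-free: `G` has no induced subgraph isomorphic to `H`
(no graph embedding of `H` into `G`). -/
def SimpleGraph.HFree {α β : Type*} (G : SimpleGraph α) (H : SimpleGraph β) : Prop :=
  ¬ Nonempty (H ↪g G)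

/-- `2K₂`: the disjoint union of two copies of `K₂`. -/
def twoK2 : SimpleGraph (Fin 2 ⊕ Fin 2) :=
  (⊤ : SimpleGraph (Fin 2)) ⊕g (⊤ : SimpleGraph (Fin 2))

/-- `P₄ ∨ Kₙ`: the join of the path on `4` vertices with the complete graph on `n` vertices. -/
def P4JoinK (n : ℕ) : SimpleGraph (Fin 4 ⊕ Fin n) :=
  SimpleGraph.join (pathGraph 4) (⊤ : SimpleGraph (Fin n))

lemma p4_embedding {V : Type} (G : SimpleGraph V) (a x y b : V)
    (hax : G.Adj a x) (hxy : G.Adj x y) (hyb : G.Adj y b)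
    (hay : ¬ G.Adj a y) (hab : ¬ G.Adj a b) (hxb : ¬ G.Adj x b)
    (nay : a ≠ y) (nab : a ≠ b) (nxb : x ≠ b) :
    Nonempty (pathGraph 4 ↪g G) := by
  have nax : a ≠ x := hax.ne
  have nxy : x ≠ y := hxy.ne
  have nyb : y ≠ b := hyb.ne
  have nxa := nax.symm; have nyx := nxy.symm; have nby := nyb.symm
  have nya := nay.symm; have nba := nab.symm; have nbx := nxb.symm
  have hxa := hax.symm; have hyx := hxy.symm; have hby := hyb.symm
  have hya : ¬ G.Adj y a := fun h => hay h.symm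
  have hba : ¬ G.Adj b a := fun h => hab h.symm
  have hbx : ¬ G.Adj b x := fun h => hxb h.symm
  refine ⟨⟨⟨![a,x,y,b], ?_⟩, ?_⟩⟩
  · intro i j hij
    fin_cases i <;> fin_cases j <;> simp_all
  · intro i j
    change G.Adj (![a, x, y, b] i) (![a, x, y, b] j) ↔ _
    fin_cases i <;> fin_cases j <;>
      simp_all [pathGraph_adj, G.irrefl] <;> decide

lemma key : ∀ (n : ℕ) (V : Type) [Fintype V] (G : SimpleGraph V),
    Fintype.card V ≤ n → ¬ Nonempty (pathGraph 4 ↪g G) → G.Colorable G.cliqueNum := by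
  intro n
  induction n with
  | zero =>
    intro V _ G hcard _
    have : IsEmpty V := Fintype.card_eq_zero_iff.mp (Nat.le_zero.mp hcard)
    exact ⟨⟨fun v => isEmptyElim v, fun {v} => isEmptyElim v⟩⟩
  | succ n ih =>
    intro V _ G hcard hfree
    classical
    by_cases hne : Nonempty V
    case neg =>
      have : IsEmpty V := not_nonempty_iff.mp hne
      exact ⟨⟨fun v => isEmptyElim v, fun {v} => isEmptyElim v⟩⟩
    -- maximum independent set
    obtain ⟨I, hIindep, hImax⟩ : ∃ I : Finset V,
        ((↑I : Set V).Pairwise fun u v => ¬ G.Adj u v) ∧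
        ∀ J : Finset V, ((↑J : Set V).Pairwise fun u v => ¬ G.Adj u v) → J.card ≤ I.card := by
      obtain ⟨I, hI1, hI2⟩ := Finset.exists_max_image
        (Finset.univ.filter fun s : Finset V => (↑s : Set V).Pairwise fun u v => ¬ G.Adj u v)
        Finset.card ⟨∅, by simp⟩
      exact ⟨I, (Finset.mem_filter.mp hI1).2,
        fun J hJ => hI2 J (Finset.mem_filter.mpr ⟨Finset.mem_univ _, hJ⟩)⟩
    have hIne : I.Nonempty := by
      obtain ⟨v⟩ := hne
      have h1 : (1 : ℕ) ≤ I.card := by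
        have := hImax {v} (by simp)
        simpa using this
      exact Finset.card_pos.mp h1
    have hdom : ∀ v ∉ I, ∃ u ∈ I, G.Adj v u := by
      intro v hv
      by_contra hcon
      push_neg at hcon
      have hsymm : Symmetric (fun u v : V => ¬ G.Adj u v) :=
        fun a b h hadj => h hadj.symm
      have hins : ((↑(insert v I) : Set V).Pairwise fun u v => ¬ G.Adj u v) := by
        rw [Finset.coe_insert]
        exact (letI : Std.Symm (fun u v : V => ¬ G.Adj u v) := ⟨hsymm⟩; Set.pairwise_insert_of_symmetric (r := fun u v : V => ¬ G.Adj u v)).mpr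
          ⟨hIindep, fun u hu _ => hcon u hu⟩
      have := hImax _ hins
      rw [Finset.card_insert_of_notMem hv] at this
      omega
    set s : Set V := (↑I : Set V)ᶜ with hs
    set G' := G.induce s with hG'
    have hfree' : ¬ Nonempty (pathGraph 4 ↪g G') :=
      fun ⟨e⟩ => hfree ⟨(Embedding.induce s).comp e⟩
    have hcard' : Fintype.card ↥s ≤ n := by
      obtain ⟨v₀, hv₀⟩ := hIne
      have hv₀s : ¬ v₀ ∈ s := by simp [hs, hv₀]
      have h2 : Fintype.card {x // (fun v => v ∈ s) x} < Fintype.card V :=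
        Fintype.card_subtype_lt hv₀s
      exact Nat.lt_succ_iff.mp (lt_of_lt_of_le h2 hcard)
    set k := G'.cliqueNum with hk
    obtain ⟨c⟩ := ih ↥s G' hcard' hfree'
    -- G is (k+1)-colorable
    have hcol1 : G.Colorable (k+1) := by
      refine ⟨⟨fun v => if h : v ∈ I then Fin.last k else
        (c ⟨v, by simp [hs, h]⟩).castSucc, ?_⟩⟩
      intro v w hadj
      split_ifs with h1 h2 h2
      · exact absurd hadj (hIindep (by simpa) (by simpa) hadj.ne)
      · exact (Fin.castSucc_lt_last _).ne'
      · exact (Fin.castSucc_lt_last _).ne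
      · intro heq
        have hadj' : G'.Adj ⟨v, by simp [hs, h1]⟩ ⟨w, by simp [hs, h2]⟩ := hadj
        exact c.valid hadj' (Fin.castSucc_injective _ heq)
    -- clique number bound : k + 1 ≤ G.cliqueNum
    have hclq : k + 1 ≤ G.cliqueNum := by
      obtain ⟨S, hS⟩ := G'.exists_isNClique_cliqueNum
      set K : Finset V := S.image Subtype.val with hKdef
      have hKcard : K.card = k := by
        rw [hKdef, Finset.card_image_of_injective _ Subtype.val_injective, hS.2]
      have hKclique : G.IsClique ↑K := by
        rintro u hu v hv huv
        rw [Finset.mem_coe, hKdef, Finset.mem_image] at hu hv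
        obtain ⟨a, ha, rfl⟩ := hu
        obtain ⟨b, hb, rfl⟩ := hv
        exact hS.1 ha hb fun hh => huv (congrArg _ hh)
      have hKI : ∀ x ∈ K, x ∉ I := by
        intro x hx
        rw [hKdef, Finset.mem_image] at hx
        obtain ⟨a, _, rfl⟩ := hx
        exact fun hIn => a.2 hIn
      -- find u ∈ I adjacent to all of K
      have hfull : ∃ u ∈ I, ∀ x ∈ K, G.Adj u x := by
        by_contra hcon
        push_neg at hcon
        rcases Finset.eq_empty_or_nonempty K with hKe | hKne
        · obtain ⟨u, hu⟩ := hIne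
          obtain ⟨x, hx, _⟩ := hcon u hu
          rw [hKe] at hx
          exact absurd hx (Finset.notMem_empty x)
        set f : V → Finset V := fun u => K.filter (G.Adj u) with hf
        obtain ⟨a, haI, hamax⟩ := Finset.exists_max_image I (fun u => (f u).card) hIne
        obtain ⟨y, hyK, hay⟩ := hcon a haI
        obtain ⟨b, hbI, hyb⟩ := hdom y (hKI y hyK)
        have hba : b ≠ a := fun hh => hay (hh ▸ hyb).symm
        have hyfb : y ∈ f b := Finset.mem_filter.mpr ⟨hyK, hyb.symm⟩
        have hynfa : y ∉ f a := fun hh => hay (Finset.mem_filter.mp hh).2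
        obtain ⟨x, hxfa, hxnfb⟩ : ∃ x ∈ f a, x ∉ f b := by
          by_contra hcon2
          push_neg at hcon2
          have hss : f a ⊂ f b := (Finset.ssubset_iff_of_subset hcon2).mpr ⟨y, hyfb, hynfa⟩
          exact absurd (hamax b hbI) (not_le.mpr (Finset.card_lt_card hss))
        obtain ⟨hxK, hax⟩ := Finset.mem_filter.mp hxfa
        have hbx : ¬ G.Adj b x := fun hh => hxnfb (Finset.mem_filter.mpr ⟨hxK, hh⟩)
        have hxy : G.Adj x y := hKclique hxK hyK (fun hh => hay (hh ▸ hax))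
        have hab : ¬ G.Adj a b :=
          hIindep (Finset.mem_coe.mpr haI) (Finset.mem_coe.mpr hbI) hba.symm
        exact hfree (p4_embedding G a x y b hax hxy hyb hay hab
          (fun hh => hbx hh.symm)
          (fun hh => (hKI y hyK) (hh ▸ haI))
          hba.symm
          (fun hh => (hKI x hxK) (hh.symm ▸ hbI)))
      obtain ⟨u, huI, hu⟩ := hfull
      have huK : u ∉ K := fun hh => (hKI u hh) huI
      have : G.IsClique ↑(insert u K) := by
        rw [Finset.coe_insert]
        exact (letI : Std.Symm G.Adj := G.symm; Set.pairwise_insert_of_symmetric (r := G.Adj)) |>.mpr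
          ⟨hKclique, fun x hx _ => hu x (Finset.mem_coe.mp hx)⟩
      have hcard2 := this.card_le_cliqueNum
      rwa [Finset.card_insert_of_notMem huK, hKcard] at hcard2
    exact hcol1.mono hclq

/-- If `H₁` or `H₂` is isomorphic to an induced subgraph of `P₄`, then the family of
`(H₁,H₂)`-free finite simple graphs is near optimal colourable. -/
theorem stmt0 {α β : Type} [Fintype α] [Fintype β]
    (H₁ : SimpleGraph α) (H₂ : SimpleGraph β)
    (h : Nonempty (H₁ ↪g pathGraph 4) ∨ Nonempty (H₂ ↪g pathGraph 4)) :
    ∃ c : ℕ, ∀ (V : Type) [Fintype V], ∀ G : SimpleGraph V,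
      G.HFree H₁ → G.HFree H₂ →
      G.chromaticNumber ≤ ↑(max c G.cliqueNum) := by
  refine ⟨0, ?_⟩
  intro V _ G hf1 hf2
  have hp4 : ¬ Nonempty (pathGraph 4 ↪g G) := by
    rcases h with he | he
    · exact fun hf => hf1 ⟨hf.some.comp he.some⟩
    · exact fun hf => hf2 ⟨hf.some.comp he.some⟩
  have hcol := key (Fintype.card V) V G le_rfl hp4
  rw [chromaticNumber_le_iff_colorable]
  exact hcol.mono (le_max_right _ _)
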